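/- In every Richman game, the limit Richman function R is a threshold budget function: for every vertex v, if Player 1's initial budget exceeds R(v) then Player 1 has a winning strategy from v (forcing the outcome to reach v_R), and if Player 2's initial budget exceeds 1 − R(v) then Player 2 has a winning strategy from v. -/

import Mathlib

open scoped Classical

/-! ### Bidding games: the basic model -/

/-- One round of a bidding game: the vertex the token was moved to, the winning bid,
and whether Player 1 won the bidding. -/
structure BidRound (V : Type) where
  dest : V
  bid : ℝ
  p1Won : Bool

/-- A history: the initial vertex together with the list of rounds played so far. -/
structure Hist (V : Type) where
  init : V
  rounds : List (BidRound V)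

/-- The vertex currently occupied by the token. -/
def Hist.cur {V : Type} (h : Hist V) : V :=
  h.rounds.getLast?.elim h.init BidRound.dest

/-- The net payment of Player 1 so far (bids paid upon winning minus bids received). -/
def Hist.pay1 {V : Type} (h : Hist V) : ℝ :=
  (h.rounds.map (fun r => if r.p1Won then r.bid else -r.bid)).sum

/-- The net payment of Player 2 so far. -/
def Hist.pay2 {V : Type} (h : Hist V) : ℝ := -h.pay1

/-- The sum of the weights of all vertices visited so far (including the current one). -/
def Hist.energyAll {V : Type} (w : V → ℤ) (h : Hist V) : ℤ :=
  w h.init + (h.rounds.map (fun r => w r.dest)).sum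

/-- A strategy: maps a history to a bid and the vertex to move to upon winning. -/
def Strat (V : Type) := Hist V → ℝ × V

/-- A tie-breaking mechanism: decides at each history whether Player 1 wins a tie. -/
def TieBreak (V : Type) := Hist V → Bool

/-- A bidding game: a finite directed graph in which every vertex has an outgoing edge. -/
structure BiddingGame (V : Type) [Fintype V] where
  E : V → V → Prop
  total : ∀ v, ∃ u, E v u

/-- One round of play: both players bid; the higher bidder (Player 1 upon a tie won by
the tie-breaking mechanism) pays his bid to the other player and moves the token. -/
noncomputable def extend {V : Type} (tb : TieBreak V) (f1 f2 : Strat V) (h : Hist V) : Hist V :=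
  if (f2 h).1 < (f1 h).1 ∨ ((f1 h).1 = (f2 h).1 ∧ tb h = true) then
    ⟨h.init, h.rounds ++ [⟨(f1 h).2, (f1 h).1, true⟩]⟩
  else
    ⟨h.init, h.rounds ++ [⟨(f2 h).2, (f2 h).1, false⟩]⟩

/-- The history after `n` rounds, starting at `v0`. -/
noncomputable def play {V : Type} (tb : TieBreak V) (f1 f2 : Strat V) (v0 : V) : ℕ → Hist V
  | 0 => ⟨v0, []⟩
  | n + 1 => extend tb f1 f2 (play tb f1 f2 v0 n)

/-- The vertex occupied after `n` rounds. -/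
noncomputable def visit {V : Type} (tb : TieBreak V) (f1 f2 : Strat V) (v0 : V) (n : ℕ) : V :=
  (play tb f1 f2 v0 n).cur

/-- The energy (sum of weights) of the prefix of length `n` of the outcome. -/
noncomputable def energy {V : Type} (w : V → ℤ) (tb : TieBreak V) (f1 f2 : Strat V) (v0 : V)
    (n : ℕ) : ℤ :=
  ∑ i ∈ Finset.range n, w (visit tb f1 f2 v0 i)

/-- Player 1's strategy is legal w.r.t. the initial budget `B`: along any play, his bids
are nonnegative, never exceed his current budget, and his moves follow edges. -/
def Legal1 {V : Type} [Fintype V] (G : BiddingGame V) (f1 : Strat V) (B : ℝ) : Prop :=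
  ∀ (tb : TieBreak V) (f2 : Strat V) (v0 : V) (n : ℕ),
    0 ≤ (f1 (play tb f1 f2 v0 n)).1 ∧
    (f1 (play tb f1 f2 v0 n)).1 ≤ B - (play tb f1 f2 v0 n).pay1 ∧
    G.E (play tb f1 f2 v0 n).cur (f1 (play tb f1 f2 v0 n)).2

/-- Player 2's strategy is legal w.r.t. the initial budget `B`. -/
def Legal2 {V : Type} [Fintype V] (G : BiddingGame V) (f2 : Strat V) (B : ℝ) : Prop :=
  ∀ (tb : TieBreak V) (f1 : Strat V) (v0 : V) (n : ℕ),
    0 ≤ (f2 (play tb f1 f2 v0 n)).1 ∧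
    (f2 (play tb f1 f2 v0 n)).1 ≤ B - (play tb f1 f2 v0 n).pay2 ∧
    G.E (play tb f1 f2 v0 n).cur (f2 (play tb f1 f2 v0 n)).2

/-- A memoryless strategy: its action depends only on the current vertex and the
player's current budget (equivalently, the net payments so far). -/
def Memoryless {V : Type} (f : Strat V) : Prop :=
  ∀ h h' : Hist V, h.cur = h'.cur → h.pay1 = h'.pay1 → f h = f h'

/-- A memoryless strategy in a mean-payoff game: its action depends only on the current
vertex, the player's current budget, and the current energy level. -/
def MemorylessE {V : Type} (w : V → ℤ) (f : Strat V) : Prop :=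
  ∀ h h' : Hist V, h.cur = h'.cur → h.pay1 = h'.pay1 →
    h.energyAll w = h'.energyAll w → f h = f h'

/-- A constant-memory strategy for Player 2 (Max): the action depends only on the current
vertex, Player 2's current budget, the current energy level, and a memory state ranging
over a finite set (of size independent of the history), updated round by round. -/
def FiniteMemory2 {V : Type} (w : V → ℤ) (f : Strat V) (B : ℝ) : Prop :=
  ∃ (M : Type) (_ : Fintype M) (m0 : M) (upd : M → BidRound V → M)
    (act : V → ℝ → ℤ → M → ℝ × V),
    ∀ h : Hist V, f h = act h.cur (B - h.pay2) (h.energyAll w) (h.rounds.foldl upd m0)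

/-- Strong connectivity of the arena. -/
def StronglyConnected {V : Type} [Fintype V] (G : BiddingGame V) : Prop :=
  ∀ v u : V, Relation.ReflTransGen G.E v u

/-! ### Richman games -/

/-- The successors of `v`. -/
noncomputable def BiddingGame.adj {V : Type} [Fintype V] (G : BiddingGame V) (v : V) :
    Finset V :=
  Finset.univ.filter (fun u => G.E v u)

lemma BiddingGame.adj_nonempty {V : Type} [Fintype V] (G : BiddingGame V) (v : V) :
    (G.adj v).Nonempty := by
  obtain ⟨u, hu⟩ := G.total v
  exact ⟨u, by simpa [BiddingGame.adj] using hu⟩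

/-- The Richman function `R(v, i)`. -/
noncomputable def Rfun {V : Type} [Fintype V] (G : BiddingGame V) (vR vS : V) :
    ℕ → V → ℝ
  | 0, v => if v = vR then 0 else 1
  | i + 1, v =>
      if v = vR then 0
      else if v = vS then 1
      else ((G.adj v).sup' (G.adj_nonempty v) (Rfun G vR vS i) +
            (G.adj v).inf' (G.adj_nonempty v) (Rfun G vR vS i)) / 2

/-- The limit Richman function `R(v) = lim_i R(v, i)`; since `i ↦ R(v, i)` is
nonincreasing, the limit equals the infimum. -/
noncomputable def Rlim {V : Type} [Fintype V] (G : BiddingGame V) (vR vS : V)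
    (v : V) : ℝ :=
  ⨅ i : ℕ, Rfun G vR vS i v

/-- Player 1 wins an outcome of a Richman game: `vR` is reached, and `vS` is not
reached before that (the game ends once a target is reached). -/
def Win1Richman {V : Type} (tb : TieBreak V) (f1 f2 : Strat V) (v0 vR vS : V) : Prop :=
  ∃ n, visit tb f1 f2 v0 n = vR ∧ ∀ m < n, visit tb f1 f2 v0 m ≠ vS

/-- Player 2 wins an outcome of a Richman game: `vS` is reached first, or no target is
ever reached. -/
def Win2Richman {V : Type} (tb : TieBreak V) (f1 f2 : Strat V) (v0 vR vS : V) : Prop :=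
  (∃ n, visit tb f1 f2 v0 n = vS ∧ ∀ m < n, visit tb f1 f2 v0 m ≠ vR) ∨
  (∀ n, visit tb f1 f2 v0 n ≠ vR ∧ visit tb f1 f2 v0 n ≠ vS)

/-- Player 1 has a winning strategy in the Richman game from `v0` with budget `B`. -/
def Win1RichmanFrom {V : Type} [Fintype V] (G : BiddingGame V) (vR vS v0 : V)
    (B : ℝ) : Prop :=
  ∀ tb : TieBreak V, ∃ f1 : Strat V, Legal1 G f1 B ∧
    ∀ f2 : Strat V, Legal2 G f2 (1 - B) → Win1Richman tb f1 f2 v0 vR vS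

/-- Player 2 has a winning strategy in the Richman game from `v0` with budget `B`. -/
def Win2RichmanFrom {V : Type} [Fintype V] (G : BiddingGame V) (vR vS v0 : V)
    (B : ℝ) : Prop :=
  ∀ tb : TieBreak V, ∃ f2 : Strat V, Legal2 G f2 B ∧
    ∀ f1 : Strat V, Legal1 G f1 (1 - B) → Win2Richman tb f1 f2 v0 vR vS

/-- `t` is a threshold budget at `v` in the Richman game. -/
def IsThreshRichman {V : Type} [Fintype V] (G : BiddingGame V) (vR vS v : V)
    (t : ℝ) : Prop :=
  (∀ B : ℝ, B ≤ 1 → t < B → Win1RichmanFrom G vR vS v B) ∧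
  (∀ B : ℝ, B ≤ 1 → 1 - t < B → Win2RichmanFrom G vR vS v B)

/-! ### Richman games with target sets -/

def Win1RichmanSet {V : Type} (tb : TieBreak V) (f1 f2 : Strat V) (v0 : V)
    (R S : Set V) : Prop :=
  ∃ n, visit tb f1 f2 v0 n ∈ R ∧ ∀ m < n, visit tb f1 f2 v0 m ∉ S

def Win2RichmanSet {V : Type} (tb : TieBreak V) (f1 f2 : Strat V) (v0 : V)
    (R S : Set V) : Prop :=
  (∃ n, visit tb f1 f2 v0 n ∈ S ∧ ∀ m < n, visit tb f1 f2 v0 m ∉ R) ∨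
  (∀ n, visit tb f1 f2 v0 n ∉ R ∧ visit tb f1 f2 v0 n ∉ S)

/-- `t` is a threshold budget at `v` in the Richman game with target sets `R` and `S`. -/
def IsThreshRichmanSet {V : Type} [Fintype V] (G : BiddingGame V) (R S : Set V)
    (v : V) (t : ℝ) : Prop :=
  (∀ B : ℝ, B ≤ 1 → t < B → ∀ tb : TieBreak V, ∃ f1 : Strat V, Legal1 G f1 B ∧
      ∀ f2 : Strat V, Legal2 G f2 (1 - B) → Win1RichmanSet tb f1 f2 v R S) ∧
  (∀ B : ℝ, B ≤ 1 → 1 - t < B → ∀ tb : TieBreak V, ∃ f2 : Strat V, Legal2 G f2 B ∧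
      ∀ f1 : Strat V, Legal1 G f1 (1 - B) → Win2RichmanSet tb f1 f2 v R S)

/-! ### Reachability games -/

/-- `t` is a threshold budget at `v` in the reachability game with target set `T`. -/
def IsThreshReach {V : Type} [Fintype V] (G : BiddingGame V) (T : Set V) (v : V)
    (t : ℝ) : Prop :=
  (∀ B : ℝ, B ≤ 1 → t < B → ∀ tb : TieBreak V, ∃ f1 : Strat V, Legal1 G f1 B ∧
      ∀ f2 : Strat V, Legal2 G f2 (1 - B) → ∃ n, visit tb f1 f2 v n ∈ T) ∧
  (∀ B : ℝ, B ≤ 1 → 1 - t < B → ∀ tb : TieBreak V, ∃ f2 : Strat V, Legal2 G f2 B ∧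
      ∀ f1 : Strat V, Legal1 G f1 (1 - B) → ∀ n, visit tb f1 f2 v n ∉ T)

/-! ### Parity games -/

/-- Player 1 wins an outcome of a parity game: the maximal parity index visited
infinitely often is odd. -/
def Win1Parity {V : Type} (p : V → ℕ) (tb : TieBreak V) (f1 f2 : Strat V)
    (v0 : V) : Prop :=
  Odd (sSup {k : ℕ | ∀ N : ℕ, ∃ n ≥ N, p (visit tb f1 f2 v0 n) = k})

def Win1ParityFrom {V : Type} [Fintype V] (G : BiddingGame V) (p : V → ℕ) (v0 : V)
    (B : ℝ) : Prop :=
  ∀ tb : TieBreak V, ∃ f1 : Strat V, Legal1 G f1 B ∧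
    ∀ f2 : Strat V, Legal2 G f2 (1 - B) → Win1Parity p tb f1 f2 v0

def Win2ParityFrom {V : Type} [Fintype V] (G : BiddingGame V) (p : V → ℕ) (v0 : V)
    (B : ℝ) : Prop :=
  ∀ tb : TieBreak V, ∃ f2 : Strat V, Legal2 G f2 B ∧
    ∀ f1 : Strat V, Legal1 G f1 (1 - B) → ¬ Win1Parity p tb f1 f2 v0

/-- `t` is a threshold budget at `v` in the parity game. -/
def IsThreshParity {V : Type} [Fintype V] (G : BiddingGame V) (p : V → ℕ) (v : V)
    (t : ℝ) : Prop :=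
  (∀ B : ℝ, B ≤ 1 → t < B → Win1ParityFrom G p v B) ∧
  (∀ B : ℝ, B ≤ 1 → 1 - t < B → Win2ParityFrom G p v B)

/-! ### Mean-payoff games (Min is Player 1, Max is Player 2) -/

/-- The mean-payoff value of the outcome. -/
noncomputable def mpval {V : Type} (w : V → ℤ) (tb : TieBreak V) (f1 f2 : Strat V)
    (v0 : V) : ℝ :=
  Filter.liminf (fun n : ℕ => (energy w tb f1 f2 v0 n : ℝ) / n) Filter.atTop

/-- Min can guarantee a nonpositive mean-payoff value from `v0` with budget `B`. -/
def MinWinsFrom {V : Type} [Fintype V] (G : BiddingGame V) (w : V → ℤ) (v0 : V)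
    (B : ℝ) : Prop :=
  ∀ tb : TieBreak V, ∃ f1 : Strat V, Legal1 G f1 B ∧
    ∀ f2 : Strat V, Legal2 G f2 (1 - B) → mpval w tb f1 f2 v0 ≤ 0

/-- Max can guarantee a strictly positive mean-payoff value from `v0` with budget `B`. -/
def MaxWinsFrom {V : Type} [Fintype V] (G : BiddingGame V) (w : V → ℤ) (v0 : V)
    (B : ℝ) : Prop :=
  ∀ tb : TieBreak V, ∃ f2 : Strat V, Legal2 G f2 B ∧
    ∀ f1 : Strat V, Legal1 G f1 (1 - B) → 0 < mpval w tb f1 f2 v0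

/-- `t` is a threshold budget at `v` in the mean-payoff game. -/
def IsThreshMP {V : Type} [Fintype V] (G : BiddingGame V) (w : V → ℤ) (v : V)
    (t : ℝ) : Prop :=
  (∀ B : ℝ, B ≤ 1 → t < B → MinWinsFrom G w v B) ∧
  (∀ B : ℝ, B ≤ 1 → 1 - t < B → MaxWinsFrom G w v B)

/-! ### The split graph `G^u` and the weighted Richman function -/

/-- Edges of `G^u`: `u` is split into `u_s = Sum.inl u` (keeping the outgoing edges of
`u`, with no incoming edges) and `u_t = Sum.inr ()` (receiving the edges into `u`, with
no outgoing edges). -/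
def splitE {V : Type} [Fintype V] (G : BiddingGame V) (u : V) :
    V ⊕ Unit → V ⊕ Unit → Prop
  | Sum.inl v, Sum.inl x => G.E v x ∧ x ≠ u
  | Sum.inl v, Sum.inr _ => G.E v u
  | Sum.inr _, _ => False

/-- The successors in `G^u` of a vertex `v ∈ V` (i.e. of `Sum.inl v`). -/
noncomputable def succu {V : Type} [Fintype V] (G : BiddingGame V) (u v : V) :
    Finset (V ⊕ Unit) :=
  Finset.univ.filter (fun y => splitE G u (Sum.inl v) y)

lemma succu_nonempty {V : Type} [Fintype V] (G : BiddingGame V) (u v : V) :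
    (succu G u v).Nonempty := by
  obtain ⟨x, hx⟩ := G.total v
  by_cases hxu : x = u
  · refine ⟨Sum.inr (), ?_⟩
    simp only [succu, Finset.mem_filter, Finset.mem_univ, true_and]
    exact show G.E v u from hxu ▸ hx
  · refine ⟨Sum.inl x, ?_⟩
    simp only [succu, Finset.mem_filter, Finset.mem_univ, true_and]
    exact show G.E v x ∧ x ≠ u from ⟨hx, hxu⟩

/-- `W(v⁺)`: the maximal value of `W` over the `G^u`-successors of `v`. -/
noncomputable def supWu {V : Type} [Fintype V] (G : BiddingGame V) (u : V)
    (W : V ⊕ Unit → ℝ) (v : V) : ℝ :=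
  (succu G u v).sup' (succu_nonempty G u v) W

/-- `W(v⁻)`: the minimal value of `W` over the `G^u`-successors of `v`. -/
noncomputable def infWu {V : Type} [Fintype V] (G : BiddingGame V) (u : V)
    (W : V ⊕ Unit → ℝ) (v : V) : ℝ :=
  (succu G u v).inf' (succu_nonempty G u v) W

/-- `W` is a weighted Richman function for the weights `w`, split at `u`:
`W(u_t) = 0` and `W(v) = (W(v⁺) + W(v⁻))/2 + w(v)` for every `v ∈ V`
(`Sum.inl v` represents `v`, in particular `Sum.inl u` is `u_s`). -/
def IsWRichman {V : Type} [Fintype V] (G : BiddingGame V) (w : V → ℝ) (u : V)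
    (W : V ⊕ Unit → ℝ) : Prop :=
  W (Sum.inr ()) = 0 ∧
  ∀ v : V, W (Sum.inl v) = (supWu G u W v + infWu G u W v) / 2 + w v

/-- Projection of `G^u`-vertices back to vertices of `G`. -/
def projU {V : Type} (u : V) : V ⊕ Unit → V := Sum.elim id (fun _ => u)

/-- `w_M`: the maximal absolute value of `W` over `V`. -/
noncomputable def wMax {V : Type} [Fintype V] (W : V ⊕ Unit → ℝ) (u : V) : ℝ :=
  Finset.univ.sup' ⟨u, Finset.mem_univ u⟩ (fun v : V => |W (Sum.inl v)|)

/-- `b_M`: the maximal value of the bid `(W(v⁺) − W(v⁻))/2` over `V`. -/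
noncomputable def bMax {V : Type} [Fintype V] (G : BiddingGame V) (u : V)
    (W : V ⊕ Unit → ℝ) : ℝ :=
  Finset.univ.sup' ⟨u, Finset.mem_univ u⟩
    (fun v : V => (supWu G u W v - infWu G u W v) / 2)

/-! Both players follow a potential `q`: bid half the spread of `q` over the successors of the
current vertex and, upon winning, move to the successor of least (Player 1) or greatest
(Player 2) potential. If the potential of the current vertex is at least (Player 1) or at most
(Player 2) the midpoint of the extreme successor values, then "budget > potential" (for
Player 2, "budget > 1 - potential") survives the round whoever wins the bidding.
Player 2 uses `R` itself, which is such a midpoint in the limit. Player 1 uses the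
finite-horizon potentials `R(·, N - k)` in round `k`, with `R(v, N) < B`; they are exact
midpoints, and `R(·, 0) = 1` off `v_R` forces him to reach `v_R` within `N` rounds.
As budgets never exceed 1, the invariants keep each player off the other's target. -/

open Filter Topology

namespace BiddingGame

variable {V : Type} [Fintype V] (G : BiddingGame V)

lemma mem_adj {v u : V} : u ∈ G.adj v ↔ G.E v u := by
  simp [BiddingGame.adj]

noncomputable def supAdj (q : V → ℝ) (v : V) : ℝ := (G.adj v).sup' (G.adj_nonempty v) q

noncomputable def infAdj (q : V → ℝ) (v : V) : ℝ := (G.adj v).inf' (G.adj_nonempty v) q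

noncomputable def avgAdj (q : V → ℝ) (v : V) : ℝ := (G.supAdj q v + G.infAdj q v) / 2

noncomputable def richmanBid (q : V → ℝ) (v : V) : ℝ := (G.supAdj q v - G.infAdj q v) / 2

noncomputable def argminAdj (q : V → ℝ) (v : V) : V :=
  (Finset.exists_mem_eq_inf' (G.adj_nonempty v) q).choose

noncomputable def argmaxAdj (q : V → ℝ) (v : V) : V :=
  (Finset.exists_mem_eq_sup' (G.adj_nonempty v) q).choose

variable {G} {q : V → ℝ} {v u : V}

lemma argminAdj_adj : G.E v (G.argminAdj q v) :=
  G.mem_adj.mp (Finset.exists_mem_eq_inf' (G.adj_nonempty v) q).choose_spec.1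

lemma argmaxAdj_adj : G.E v (G.argmaxAdj q v) :=
  G.mem_adj.mp (Finset.exists_mem_eq_sup' (G.adj_nonempty v) q).choose_spec.1

lemma apply_argminAdj : q (G.argminAdj q v) = G.infAdj q v :=
  (Finset.exists_mem_eq_inf' (G.adj_nonempty v) q).choose_spec.2.symm

lemma apply_argmaxAdj : q (G.argmaxAdj q v) = G.supAdj q v :=
  (Finset.exists_mem_eq_sup' (G.adj_nonempty v) q).choose_spec.2.symm

lemma le_supAdj (h : G.E v u) : q u ≤ G.supAdj q v :=
  Finset.le_sup' q (G.mem_adj.mpr h)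

lemma infAdj_le (h : G.E v u) : G.infAdj q v ≤ q u :=
  Finset.inf'_le q (G.mem_adj.mpr h)

lemma infAdj_le_supAdj : G.infAdj q v ≤ G.supAdj q v := by
  obtain ⟨u, hu⟩ := G.total v
  exact (infAdj_le hu).trans (le_supAdj hu)

lemma richmanBid_nonneg : 0 ≤ G.richmanBid q v := by
  have := G.infAdj_le_supAdj (q := q) (v := v)
  unfold richmanBid; linarith

lemma richmanBid_le_avgAdj (hq : ∀ u, 0 ≤ q u) : G.richmanBid q v ≤ G.avgAdj q v := by
  have : 0 ≤ G.infAdj q v := Finset.le_inf' _ _ fun u _ => hq u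
  unfold richmanBid avgAdj; linarith

lemma richmanBid_le_one_sub_avgAdj (hq : ∀ u, q u ≤ 1) :
    G.richmanBid q v ≤ 1 - G.avgAdj q v := by
  have : G.supAdj q v ≤ 1 := Finset.sup'_le _ _ fun u _ => hq u
  unfold richmanBid avgAdj; linarith

lemma avgAdj_mono {q' : V → ℝ} (h : ∀ u, q u ≤ q' u) : G.avgAdj q v ≤ G.avgAdj q' v := by
  have hsup : G.supAdj q v ≤ G.supAdj q' v := Finset.sup'_mono_fun fun u _ => h u
  have hinf : G.infAdj q v ≤ G.infAdj q' v :=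
    Finset.le_inf' _ _ fun u hu => (Finset.inf'_le _ hu).trans (h u)
  unfold avgAdj; linarith

lemma le_avgAdj {c : ℝ} (h : ∀ u, c ≤ q u) : c ≤ G.avgAdj q v :=
  avgAdj_mono (q := fun _ => c) h |>.trans_eq' <| by
    simp [avgAdj, supAdj, infAdj]

lemma avgAdj_le {c : ℝ} (h : ∀ u, q u ≤ c) : G.avgAdj q v ≤ c :=
  avgAdj_mono (q' := fun _ => c) h |>.trans_eq <| by
    simp [avgAdj, supAdj, infAdj]

end BiddingGame

section Play

variable {V : Type} (tb : TieBreak V) (f1 f2 : Strat V)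

lemma play_succ (v0 : V) (n : ℕ) :
    play tb f1 f2 v0 (n + 1) = extend tb f1 f2 (play tb f1 f2 v0 n) := rfl

lemma play_length (v0 : V) (n : ℕ) : (play tb f1 f2 v0 n).rounds.length = n := by
  induction n with
  | zero => rfl
  | succ n ih => rw [play_succ, extend]; split <;> simp [ih]

lemma extend_spec (h : Hist V) :
    ((extend tb f1 f2 h).cur = (f1 h).2 ∧
      (extend tb f1 f2 h).pay1 = h.pay1 + (f1 h).1 ∧ (f2 h).1 ≤ (f1 h).1) ∨
    ((extend tb f1 f2 h).cur = (f2 h).2 ∧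
      (extend tb f1 f2 h).pay1 = h.pay1 - (f2 h).1 ∧ (f1 h).1 ≤ (f2 h).1) := by
  unfold extend
  split
  case isTrue hwin =>
    refine .inl ⟨by simp [Hist.cur], by simp [Hist.pay1], ?_⟩
    rcases hwin with hlt | ⟨heq, -⟩
    exacts [hlt.le, heq.ge]
  case isFalse hlose =>
    refine .inr ⟨by simp [Hist.cur], by simp [Hist.pay1, sub_eq_add_neg], ?_⟩
    exact (not_or.mp hlose).1 |> not_lt.mp

end Play

section Legality

variable {V : Type} [Fintype V] {G : BiddingGame V} {tb : TieBreak V} {f1 f2 : Strat V}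
  {B : ℝ} {v0 : V}

lemma Legal1.budget_nonneg (hf1 : Legal1 G f1 B) (n : ℕ) :
    0 ≤ B - (play tb f1 f2 v0 n).pay1 :=
  (hf1 tb f2 v0 n).1.trans (hf1 tb f2 v0 n).2.1

lemma Legal2.budget_nonneg (hf2 : Legal2 G f2 B) (n : ℕ) :
    0 ≤ B - (play tb f1 f2 v0 n).pay2 :=
  (hf2 tb f1 v0 n).1.trans (hf2 tb f1 v0 n).2.1

lemma legal1_of_bid_le_max (hB : 0 ≤ B)
    (hbid : ∀ h, 0 ≤ (f1 h).1 ∧ (f1 h).1 ≤ max 0 (B - h.pay1))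
    (hmove : ∀ h, G.E h.cur (f1 h).2) : Legal1 G f1 B := by
  intro tb f2 v0 n
  suffices hbud : 0 ≤ B - (play tb f1 f2 v0 n).pay1 by
    exact ⟨(hbid _).1, max_eq_right hbud ▸ (hbid _).2, hmove _⟩
  induction n with
  | zero => simpa [play, Hist.pay1] using hB
  | succ n ih =>
    have hle := max_eq_right ih ▸ (hbid (play tb f1 f2 v0 n)).2
    rcases extend_spec tb f1 f2 (play tb f1 f2 v0 n) with ⟨-, hpay, -⟩ | ⟨-, hpay, hlose⟩
    · rw [play_succ, hpay]; linarith
    · rw [play_succ, hpay]; linarith [(hbid (play tb f1 f2 v0 n)).1]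

lemma legal2_of_bid_le_max (hB : 0 ≤ B)
    (hbid : ∀ h, 0 ≤ (f2 h).1 ∧ (f2 h).1 ≤ max 0 (B - h.pay2))
    (hmove : ∀ h, G.E h.cur (f2 h).2) : Legal2 G f2 B := by
  intro tb f1 v0 n
  suffices hbud : 0 ≤ B - (play tb f1 f2 v0 n).pay2 by
    exact ⟨(hbid _).1, max_eq_right hbud ▸ (hbid _).2, hmove _⟩
  induction n with
  | zero => simpa [play, Hist.pay2, Hist.pay1] using hB
  | succ n ih =>
    have hle := max_eq_right ih ▸ (hbid (play tb f1 f2 v0 n)).2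
    simp only [Hist.pay2] at ih hle ⊢
    rcases extend_spec tb f1 f2 (play tb f1 f2 v0 n) with ⟨-, hpay, hlose⟩ | ⟨-, hpay, -⟩
    · rw [play_succ, hpay]; linarith [(hbid (play tb f1 f2 v0 n)).1]
    · rw [play_succ, hpay]; linarith

end Legality

section RichmanStrategies

variable {V : Type} [Fintype V] (G : BiddingGame V)

noncomputable def richmanStrat1 (B : ℝ) (q : Hist V → V → ℝ) : Strat V := fun h =>
  (max 0 (min (G.richmanBid (q h) h.cur) (B - h.pay1)), G.argminAdj (q h) h.cur)

noncomputable def richmanStrat2 (B : ℝ) (q : Hist V → V → ℝ) : Strat V := fun h =>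
  (max 0 (min (G.richmanBid (q h) h.cur) (B - h.pay2)), G.argmaxAdj (q h) h.cur)

variable {G} {B : ℝ} {q : Hist V → V → ℝ}

lemma richmanStrat1_legal (hB : 0 ≤ B) : Legal1 G (richmanStrat1 G B q) B :=
  legal1_of_bid_le_max hB
    (fun _ => ⟨le_max_left _ _, max_le_max le_rfl (min_le_right _ _)⟩)
    (fun _ => BiddingGame.argminAdj_adj)

lemma richmanStrat2_legal (hB : 0 ≤ B) : Legal2 G (richmanStrat2 G B q) B :=
  legal2_of_bid_le_max hB
    (fun _ => ⟨le_max_left _ _, max_le_max le_rfl (min_le_right _ _)⟩)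
    (fun _ => BiddingGame.argmaxAdj_adj)

lemma richmanStrat1_apply_of_le {h : Hist V} (hbid : G.richmanBid (q h) h.cur ≤ B - h.pay1) :
    richmanStrat1 G B q h = (G.richmanBid (q h) h.cur, G.argminAdj (q h) h.cur) := by
  rw [richmanStrat1, min_eq_left hbid, max_eq_right G.richmanBid_nonneg]

lemma richmanStrat2_apply_of_le {h : Hist V} (hbid : G.richmanBid (q h) h.cur ≤ B - h.pay2) :
    richmanStrat2 G B q h = (G.richmanBid (q h) h.cur, G.argmaxAdj (q h) h.cur) := by
  rw [richmanStrat2, min_eq_left hbid, max_eq_right G.richmanBid_nonneg]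

end RichmanStrategies

section BudgetStep

variable {V : Type} [Fintype V] {G : BiddingGame V} (tb : TieBreak V) {f1 f2 : Strat V}
  {h : Hist V} {q : V → ℝ} {p B : ℝ}

/-- Winning the bid costs `richmanBid` and reaches `infAdj`; losing it earns at least
`richmanBid` and reaches at most `supAdj`. -/
lemma budget1_step (hf1 : f1 h = (G.richmanBid q h.cur, G.argminAdj q h.cur))
    (hf2 : G.E h.cur (f2 h).2) (hp : G.avgAdj q h.cur ≤ p) (hbud : p < B - h.pay1) :
    q (extend tb f1 f2 h).cur < B - (extend tb f1 f2 h).pay1 := by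
  unfold BiddingGame.avgAdj at hp
  rcases extend_spec tb f1 f2 h with ⟨hcur, hpay, -⟩ | ⟨hcur, hpay, hlose⟩
  · rw [hcur, hpay, hf1, BiddingGame.apply_argminAdj (q := q)]
    unfold BiddingGame.richmanBid; linarith
  · rw [hf1] at hlose
    have hnext := BiddingGame.le_supAdj (q := q) hf2
    rw [hcur, hpay]
    unfold BiddingGame.richmanBid at hlose; linarith

lemma budget2_step (hf2 : f2 h = (G.richmanBid q h.cur, G.argmaxAdj q h.cur))
    (hf1 : G.E h.cur (f1 h).2) (hp : p ≤ G.avgAdj q h.cur) (hbud : 1 - p < B - h.pay2) :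
    1 - q (extend tb f1 f2 h).cur < B - (extend tb f1 f2 h).pay2 := by
  unfold BiddingGame.avgAdj at hp
  simp only [Hist.pay2] at hbud ⊢
  rcases extend_spec tb f1 f2 h with ⟨hcur, hpay, hlose⟩ | ⟨hcur, hpay, -⟩
  · rw [hf2] at hlose
    have hnext := BiddingGame.infAdj_le (q := q) hf1
    rw [hcur, hpay]
    unfold BiddingGame.richmanBid at hlose; linarith
  · rw [hcur, hpay, hf2, BiddingGame.apply_argmaxAdj (q := q)]
    unfold BiddingGame.richmanBid; linarith

end BudgetStep

section RichmanFunction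

variable {V : Type} [Fintype V] (G : BiddingGame V) (vR vS : V)

lemma Rfun_zero_of_ne {v : V} (hR : v ≠ vR) : Rfun G vR vS 0 v = 1 := if_neg hR

lemma Rfun_succ_of_ne {v : V} (hR : v ≠ vR) (hS : v ≠ vS) (i : ℕ) :
    Rfun G vR vS (i + 1) v = G.avgAdj (Rfun G vR vS i) v := by
  rw [Rfun, if_neg hR, if_neg hS]; rfl

lemma Rfun_vR (i : ℕ) : Rfun G vR vS i vR = 0 := by
  cases i <;> simp [Rfun]

lemma Rfun_vS (hRS : vR ≠ vS) (i : ℕ) : Rfun G vR vS i vS = 1 := by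
  cases i <;> simp [Rfun, hRS.symm]

lemma Rfun_nonneg (i : ℕ) (v : V) : 0 ≤ Rfun G vR vS i v := by
  induction i generalizing v with
  | zero => unfold Rfun; split <;> norm_num
  | succ i ih =>
    by_cases hR : v = vR; · rw [hR, Rfun_vR]
    by_cases hS : v = vS; · subst hS; simp [Rfun, hR]
    rw [Rfun_succ_of_ne G vR vS hR hS]
    exact BiddingGame.le_avgAdj ih

lemma Rfun_le_one (i : ℕ) (v : V) : Rfun G vR vS i v ≤ 1 := by
  induction i generalizing v with
  | zero => unfold Rfun; split <;> norm_num
  | succ i ih =>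
    by_cases hR : v = vR; · simp [hR, Rfun_vR]
    by_cases hS : v = vS; · subst hS; simp [Rfun, hR]
    rw [Rfun_succ_of_ne G vR vS hR hS]
    exact BiddingGame.avgAdj_le ih

lemma Rfun_antitone (v : V) : Antitone fun i => Rfun G vR vS i v := by
  refine antitone_nat_of_succ_le fun i => ?_
  induction i generalizing v with
  | zero =>
    by_cases hR : v = vR
    · simp [hR, Rfun_vR]
    · exact (Rfun_zero_of_ne G vR vS hR).symm ▸ Rfun_le_one G vR vS 1 v
  | succ i ih =>
    by_cases hR : v = vR; · simp [hR, Rfun_vR]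
    by_cases hS : v = vS; · subst hS; simp [Rfun, hR]
    rw [Rfun_succ_of_ne G vR vS hR hS, Rfun_succ_of_ne G vR vS hR hS]
    exact BiddingGame.avgAdj_mono ih

lemma bddBelow_range_Rfun (v : V) : BddBelow (Set.range fun i => Rfun G vR vS i v) :=
  ⟨0, by rintro _ ⟨i, rfl⟩; exact Rfun_nonneg G vR vS i v⟩

lemma tendsto_Rfun (v : V) :
    Tendsto (fun i => Rfun G vR vS i v) atTop (𝓝 (Rlim G vR vS v)) :=
  tendsto_atTop_ciInf (Rfun_antitone G vR vS v) (bddBelow_range_Rfun G vR vS v)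

lemma Rlim_le_one (v : V) : Rlim G vR vS v ≤ 1 :=
  (ciInf_le (bddBelow_range_Rfun G vR vS v) 0).trans (Rfun_le_one G vR vS 0 v)

lemma Rlim_vR : Rlim G vR vS vR = 0 := by
  simp [Rlim, Rfun_vR]

lemma Rlim_eq_avgAdj {v : V} (hR : v ≠ vR) (hS : v ≠ vS) :
    Rlim G vR vS v = G.avgAdj (Rlim G vR vS) v := by
  have hsucc := (tendsto_Rfun G vR vS v).comp (tendsto_add_atTop_nat 1)
  simp only [Function.comp_def, Rfun_succ_of_ne G vR vS hR hS] at hsucc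
  refine tendsto_nhds_unique hsucc ((Tendsto.add ?_ ?_).div_const 2)
  · exact Tendsto.finset_sup'_nhds_apply _ fun u _ => tendsto_Rfun G vR vS u
  · exact Tendsto.finset_inf'_nhds_apply _ fun u _ => tendsto_Rfun G vR vS u

end RichmanFunction

section Invariants

variable {α : Type*} {x : ℕ → α} {a b : α} {I : ℕ → Prop}

lemma exists_eq_forall_ne_of_invariant {N : ℕ} (h0 : I 0)
    (hstep : ∀ k < N, I k → x k ≠ a → x k ≠ b → I (k + 1))
    (hb : ∀ k ≤ N, I k → x k ≠ b) (hN : I N → x N = a) :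
    ∃ n, x n = a ∧ ∀ m < n, x m ≠ b := by
  have hinv : ∀ n ≤ N, (∀ m < n, x m ≠ a) → I n := by
    intro n
    induction n with
    | zero => exact fun _ _ => h0
    | succ k ih =>
      intro hk ha
      have hIk := ih (k.le_succ.trans hk) fun m hm => ha m (hm.trans k.lt_succ_self)
      exact hstep k hk hIk (ha k k.lt_succ_self) (hb k (k.le_succ.trans hk) hIk)
  have hex : ∃ n, n ≤ N ∧ x n = a := by
    by_contra! hne
    exact hne N le_rfl (hN (hinv N le_rfl fun m hm => hne m hm.le))
  have hfirst := Nat.find_spec hex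
  refine ⟨Nat.find hex, hfirst.2, fun m hm => hb m (hm.le.trans hfirst.1) ?_⟩
  refine hinv m (hm.le.trans hfirst.1) fun m' hm' hxa => ?_
  exact Nat.find_min hex (hm'.trans hm) ⟨(hm'.trans hm).le.trans hfirst.1, hxa⟩

lemma exists_eq_forall_ne_or_forall_ne_of_invariant (h0 : I 0)
    (hstep : ∀ k, I k → x k ≠ a → x k ≠ b → I (k + 1)) (ha : ∀ k, I k → x k ≠ a) :
    (∃ n, x n = b ∧ ∀ m < n, x m ≠ a) ∨ ∀ n, x n ≠ a ∧ x n ≠ b := by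
  have hinv : ∀ n, (∀ m < n, x m ≠ b) → I n := by
    intro n
    induction n with
    | zero => exact fun _ => h0
    | succ k ih =>
      intro hb
      have hIk := ih fun m hm => hb m (hm.trans k.lt_succ_self)
      exact hstep k hIk (ha k hIk) (hb k k.lt_succ_self)
  by_cases hex : ∃ n, x n = b
  · refine .inl ⟨Nat.find hex, Nat.find_spec hex, fun m hm => ha m (hinv m fun m' hm' => ?_)⟩
    exact Nat.find_min hex (hm'.trans hm)
  · rw [not_exists] at hex
    exact .inr fun n => ⟨ha n (hinv n fun m _ => hex m), hex n⟩

end Invariants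

section Threshold

variable {V : Type} [Fintype V] {G : BiddingGame V} {vR vS v : V} {B : ℝ}

lemma win1RichmanFrom_of_Rfun_lt (hRS : vR ≠ vS) {N : ℕ} (hN : Rfun G vR vS N v < B) :
    Win1RichmanFrom G vR vS v B := by
  intro tb
  set f1 := richmanStrat1 G B fun h => Rfun G vR vS (N - 1 - h.rounds.length)
  refine ⟨f1, richmanStrat1_legal ((Rfun_nonneg G vR vS N v).trans hN.le), fun f2 hf2 => ?_⟩
  have hle_one (k : ℕ) : B - (play tb f1 f2 v k).pay1 ≤ 1 := by
    have := hf2.budget_nonneg (tb := tb) (f1 := f1) (v0 := v) k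
    simp only [Hist.pay2] at this; linarith
  refine exists_eq_forall_ne_of_invariant (N := N)
    (I := fun k => Rfun G vR vS (N - k) (visit tb f1 f2 v k) < B - (play tb f1 f2 v k).pay1)
    (by simpa [visit, play, Hist.cur, Hist.pay1] using hN) (fun k hk hI hR hS => ?_)
    (fun k _ hI hS => ?_) (fun hI => ?_)
  · rw [show N - k = N - 1 - k + 1 by omega, Rfun_succ_of_ne G vR vS hR hS] at hI
    have hf1 := richmanStrat1_apply_of_le (G := G) (B := B) (h := play tb f1 f2 v k)
      (q := fun h => Rfun G vR vS (N - 1 - h.rounds.length)) ?_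
    · rw [play_length] at hf1
      rw [show N - (k + 1) = N - 1 - k by omega]
      exact budget1_step tb hf1 (hf2 tb f1 v k).2.2 le_rfl hI
    · rw [play_length]
      exact (G.richmanBid_le_avgAdj (Rfun_nonneg G vR vS _)).trans hI.le
  · rw [hS, Rfun_vS G vR vS hRS] at hI
    linarith [hle_one k]
  · by_contra hR
    rw [Nat.sub_self, Rfun_zero_of_ne G vR vS hR] at hI
    linarith [hle_one N]

lemma win1RichmanFrom_of_Rlim_lt (hRS : vR ≠ vS) (hB : Rlim G vR vS v < B) :
    Win1RichmanFrom G vR vS v B :=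
  let ⟨_, hN⟩ := exists_lt_of_ciInf_lt hB
  win1RichmanFrom_of_Rfun_lt hRS hN

lemma win2RichmanFrom_of_one_sub_Rlim_lt (hB : 1 - Rlim G vR vS v < B) :
    Win2RichmanFrom G vR vS v B := by
  intro tb
  set f2 := richmanStrat2 G B fun _ => Rlim G vR vS
  refine ⟨f2, richmanStrat2_legal (by linarith [Rlim_le_one G vR vS v]), fun f1 hf1 => ?_⟩
  have hle_one (k : ℕ) : B - (play tb f1 f2 v k).pay2 ≤ 1 := by
    have := hf1.budget_nonneg (tb := tb) (f2 := f2) (v0 := v) k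
    simp only [Hist.pay2]; linarith
  refine exists_eq_forall_ne_or_forall_ne_of_invariant
    (I := fun k => 1 - Rlim G vR vS (visit tb f1 f2 v k) < B - (play tb f1 f2 v k).pay2)
    (by simpa [visit, play, Hist.cur, Hist.pay2, Hist.pay1] using hB) (fun k hI hR hS => ?_)
    (fun k hI hR => ?_)
  · rw [Rlim_eq_avgAdj G vR vS hR hS] at hI
    have hf2 := richmanStrat2_apply_of_le (G := G) (B := B) (h := play tb f1 f2 v k)
      (q := fun _ => Rlim G vR vS)
      ((G.richmanBid_le_one_sub_avgAdj (Rlim_le_one G vR vS)).trans hI.le)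
    exact budget2_step tb hf2 (hf1 tb f2 v k).2.2 le_rfl hI
  · rw [hR, Rlim_vR] at hI
    linarith [hle_one k]

end Threshold

/-- The limit Richman function is a threshold budget function: if
Player 1's budget exceeds `R(v)` he has a winning strategy from `v`, and if Player 2's
budget exceeds `1 - R(v)` he has a winning strategy from `v` (for every tie-breaking
mechanism). -/
theorem richman_Rlim_is_threshold
    {V : Type} [Fintype V] (G : BiddingGame V) (vR vS : V) (hRS : vR ≠ vS) (v : V) :
    (∀ B : ℝ, B ≤ 1 → Rlim G vR vS v < B → ∀ tb : TieBreak V,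
      ∃ f1 : Strat V, Legal1 G f1 B ∧
        ∀ f2 : Strat V, Legal2 G f2 (1 - B) → Win1Richman tb f1 f2 v vR vS) ∧
    (∀ B : ℝ, B ≤ 1 → 1 - Rlim G vR vS v < B → ∀ tb : TieBreak V,
      ∃ f2 : Strat V, Legal2 G f2 B ∧
        ∀ f1 : Strat V, Legal1 G f1 (1 - B) → Win2Richman tb f1 f2 v vR vS) :=
  ⟨fun _ _ hB => win1RichmanFrom_of_Rlim_lt hRS hB,
    fun _ _ hB => win2RichmanFrom_of_one_sub_Rlim_lt hB⟩
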